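/- Let Φ = (G, φ) be a T-gain graph on a connected graph. Then Φ is balanced if and only if the associated complete T-gain graph K^{D^max}(Φ) is balanced; equivalently, if and only if D^max(Φ) = D^min(Φ) and K^D(Φ) is balanced. -/

import Mathlib

open Matrix
open scoped Classical

noncomputable section

namespace GG

variable {V : Type*}

/-- The gain of a walk: product of the gains of its oriented edges. -/
def walkGain {G : SimpleGraph V} (φ : V → V → ℂ) {u v : V} (p : G.Walk u v) : ℂ :=
  (p.darts.map (fun d => φ d.toProd.1 d.toProd.2)).prod

/-- `φ` is a `𝕋`-gain function on `G`: unit modulus on edges, inverse under reversal. -/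
def IsGain (G : SimpleGraph V) (φ : V → V → ℂ) : Prop :=
  (∀ i j, G.Adj i j → ‖φ i j‖ = 1) ∧ (∀ i j, G.Adj i j → φ j i = (φ i j)⁻¹)

/-- Adjacency matrix of a gain graph. -/
def gainAdj [Fintype V] [DecidableEq V] (G : SimpleGraph V) (φ : V → V → ℂ) :
    Matrix V V ℂ := fun i j => if G.Adj i j then φ i j else 0

/-- A gain graph is balanced if every cycle has gain 1. -/
def GBalanced (G : SimpleGraph V) (φ : V → V → ℂ) : Prop :=
  ∀ (u : V) (c : G.Walk u u), c.IsCycle → walkGain φ c = 1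

/-- All shortest paths between any pair of vertices have the same gain. -/
def DistCompatible (G : SimpleGraph V) (φ : V → V → ℂ) : Prop :=
  ∀ (s t : V) (p q : G.Walk s t), p.length = G.dist s t → q.length = G.dist s t →
    walkGain φ p = walkGain φ q

/-- The set of gains of shortest `s`-`t` paths. -/
def shortestGains (G : SimpleGraph V) (φ : V → V → ℂ) (s t : V) : Set ℂ :=
  {z | ∃ p : G.Walk s t, p.length = G.dist s t ∧ walkGain φ p = z}

/-- The element of `S` maximizing the real part, ties broken by maximal imaginary part
(correct for finite nonempty sets of gains). -/
def lexMaxGain (S : Set ℂ) : ℂ :=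
  ⟨sSup (Complex.re '' S), sSup (Complex.im '' {z ∈ S | z.re = sSup (Complex.re '' S)})⟩

/-- The element of `S` minimizing the real part, ties broken by minimal imaginary part. -/
def lexMinGain (S : Set ℂ) : ℂ :=
  ⟨sInf (Complex.re '' S), sInf (Complex.im '' {z ∈ S | z.re = sInf (Complex.re '' S)})⟩

/-- The maximum gain distance matrix `D^max_<(Φ)` with respect to a strict order `lt`. -/
def Dmax [Fintype V] [DecidableEq V] (G : SimpleGraph V) (φ : V → V → ℂ)
    (lt : V → V → Prop) : Matrix V V ℂ := fun s t =>
  if lt s t then lexMaxGain (shortestGains G φ s t) * (G.dist s t : ℂ)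
  else if lt t s then (starRingEnd ℂ) (lexMaxGain (shortestGains G φ t s)) * (G.dist s t : ℂ)
  else 0

/-- The minimum gain distance matrix `D^min_<(Φ)` with respect to a strict order `lt`. -/
def Dmin [Fintype V] [DecidableEq V] (G : SimpleGraph V) (φ : V → V → ℂ)
    (lt : V → V → Prop) : Matrix V V ℂ := fun s t =>
  if lt s t then lexMinGain (shortestGains G φ s t) * (G.dist s t : ℂ)
  else if lt t s then (starRingEnd ℂ) (lexMinGain (shortestGains G φ t s)) * (G.dist s t : ℂ)
  else 0

/-- Vertex order independence: the gain distance matrices agree for the standard order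
and its reverse. -/
def OrderIndependent [Fintype V] [DecidableEq V] [LinearOrder V] (G : SimpleGraph V)
    (φ : V → V → ℂ) : Prop :=
  Dmax G φ (· < ·) = Dmax G φ (fun a b => b < a) ∧
  Dmin G φ (· < ·) = Dmin G φ (fun a b => b < a)

/-- The largest (real) eigenvalue of a matrix. -/
def maxEig [Fintype V] [DecidableEq V] (A : Matrix V V ℂ) : ℝ :=
  sSup {r : ℝ | (r : ℂ) ∈ spectrum ℂ A}

/-- The spectral radius of a matrix. -/
def specRad [Fintype V] [DecidableEq V] (A : Matrix V V ℂ) : ℝ :=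
  sSup {r : ℝ | ∃ z ∈ spectrum ℂ A, ‖z‖ = r}

/-- The distance matrix of the underlying graph, as a complex matrix. -/
def distMatrix [Fintype V] [DecidableEq V] (G : SimpleGraph V) : Matrix V V ℂ :=
  fun i j => (G.dist i j : ℂ)

/-- Weighted gain adjacency matrix `A(Φ_w)`. -/
def wGainAdj [Fintype V] [DecidableEq V] (G : SimpleGraph V) (φ : V → V → ℂ)
    (w : V → V → ℝ) : Matrix V V ℂ := fun i j => if G.Adj i j then φ i j * (w i j : ℂ) else 0

/-- Weighted adjacency matrix `A(G_w)` of the underlying weighted graph. -/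
def wAdj [Fintype V] [DecidableEq V] (G : SimpleGraph V) (w : V → V → ℝ) :
    Matrix V V ℂ := fun i j => if G.Adj i j then (w i j : ℂ) else 0


/-- Gain function of the associated complete gain graph `K^{D^max}(Φ)`: edges of `Φ` keep
their gains, non-adjacent pairs get the maximum auxiliary gain. -/
def kappaMax {V : Type*} [LinearOrder V] (G : SimpleGraph V) (φ : V → V → ℂ) :
    V → V → ℂ := fun s t =>
  if G.Adj s t then φ s t
  else if s < t then lexMaxGain (shortestGains G φ s t)
  else if t < s then (starRingEnd ℂ) (lexMaxGain (shortestGains G φ t s))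
  else 1

/-! A balanced connected gain graph is a coboundary: `φ s t = θ t / θ s` for a unit potential
`θ`. Hence all shortest `s`-`t` paths have the same gain, so `D^max = D^min`, and every added
edge of `K^{D^max}(Φ)` also gets gain `θ t / θ s`, which makes that complete graph balanced.
Conversely, `Φ` sits inside `K^{D^max}(Φ)` with its own gains, so its cycles are cycles there. -/

open SimpleGraph

variable {G : SimpleGraph V} {φ : V → V → ℂ}

section walkGain

@[simp] lemma walkGain_nil {u : V} : walkGain φ (Walk.nil : G.Walk u u) = 1 := rfl

@[simp] lemma walkGain_cons {u v w : V} (h : G.Adj u v) (p : G.Walk v w) :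
    walkGain φ (Walk.cons h p) = φ u v * walkGain φ p := by
  simp [walkGain]

@[simp] lemma walkGain_append {u v w : V} (p : G.Walk u v) (q : G.Walk v w) :
    walkGain φ (p.append q) = walkGain φ p * walkGain φ q := by
  simp [walkGain, Walk.darts_append]

lemma norm_walkGain (hφ : IsGain G φ) {u v : V} (p : G.Walk u v) : ‖walkGain φ p‖ = 1 := by
  induction p with
  | nil => simp
  | cons h p ih => simp only [walkGain_cons, norm_mul, ih, hφ.1 _ _ h, mul_one]

lemma IsGain.ne_zero (hφ : IsGain G φ) {u v : V} (h : G.Adj u v) : φ u v ≠ 0 :=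
  norm_ne_zero_iff.mp (by simp [hφ.1 _ _ h])

lemma walkGain_ne_zero (hφ : IsGain G φ) {u v : V} (p : G.Walk u v) : walkGain φ p ≠ 0 :=
  norm_ne_zero_iff.mp (by simp [norm_walkGain hφ p])

lemma walkGain_reverse (hφ : IsGain G φ) {u v : V} (p : G.Walk u v) :
    walkGain φ p.reverse = (walkGain φ p)⁻¹ := by
  induction p with
  | nil => simp
  | cons h p ih => simp [Walk.reverse_cons, ih, hφ.2 _ _ h, mul_comm]

lemma walkGain_eq_div_of_adj {H : SimpleGraph V} {ψ : V → V → ℂ} {θ : V → ℂ}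
    (hθ : ∀ v, θ v ≠ 0) (hψ : ∀ s t, H.Adj s t → ψ s t = θ t / θ s) {u v : V}
    (p : H.Walk u v) : walkGain ψ p = θ v / θ u := by
  induction p with
  | nil => simp [hθ]
  | cons h p ih => rw [walkGain_cons, ih, hψ _ _ h, div_mul_div_cancel₀' (hθ _)]

lemma gBalanced_of_adj_eq_div {H : SimpleGraph V} {ψ : V → V → ℂ} {θ : V → ℂ}
    (hθ : ∀ v, θ v ≠ 0) (hψ : ∀ s t, H.Adj s t → ψ s t = θ t / θ s) :
    GBalanced H ψ :=
  fun u c _ => by rw [walkGain_eq_div_of_adj hθ hψ c, div_self (hθ u)]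

end walkGain

namespace GBalanced

variable (hφ : IsGain G φ) (hb : GBalanced G φ)
include hφ hb

/-- Closing a path `q : x ⟶ u` by an edge `u ~ x` gives a cycle unless `q` is that edge
traversed backwards; either way the gain is `1`. -/
lemma gain_mul_walkGain_path {u x : V} (h : G.Adj u x) {q : G.Walk x u} (hq : q.IsPath) :
    φ u x * walkGain φ q = 1 := by
  by_cases he : s(u, x) ∈ q.edges
  · cases q with
    | nil => simp at he
    | @cons _ y _ _ r =>
      rw [Walk.cons_isPath_iff] at hq
      rw [Walk.edges_cons, List.mem_cons] at he
      rcases he with he | he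
      · obtain rfl : y = u := by
          rcases Sym2.eq_iff.mp he with ⟨h1, -⟩ | ⟨h1, -⟩
          · exact absurd h1 h.ne
          · exact h1.symm
        obtain rfl := Walk.eq_nil_iff_nil.mpr (Walk.isPath_iff_nil.mp hq.1)
        simp [hφ.2 _ _ h, mul_inv_cancel₀ (hφ.ne_zero h)]
      · exact absurd (r.fst_mem_support_of_mem_edges (Sym2.eq_swap ▸ he)) hq.2
  · simpa using hb u _ (Walk.cons_isCycle_iff q h |>.mpr ⟨hq, he⟩)

lemma walkGain_bypass {u v : V} (p : G.Walk u v) : walkGain φ p.bypass = walkGain φ p := by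
  induction p with
  | nil => rfl
  | @cons u x v h p ih =>
    rw [Walk.bypass]
    split_ifs with hs
    · have hsplit := Walk.take_spec p.bypass hs
      have hloop := gain_mul_walkGain_path hφ hb h ((p.bypass_isPath).takeUntil hs)
      calc walkGain φ (p.bypass.dropUntil u hs)
          = φ u x * walkGain φ (p.bypass.takeUntil u hs) *
              walkGain φ (p.bypass.dropUntil u hs) := by rw [hloop, one_mul]
        _ = walkGain φ (Walk.cons h p) := by
          rw [mul_assoc, ← walkGain_append, hsplit, ih, walkGain_cons]
    · simp [ih]

lemma walkGain_of_closed {u : V} (c : G.Walk u u) : walkGain φ c = 1 := by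
  rw [← walkGain_bypass hφ hb,
    Walk.eq_nil_iff_nil.mpr (Walk.isPath_iff_nil.mp c.bypass_isPath), walkGain_nil]

lemma walkGain_eq {u v : V} (p q : G.Walk u v) : walkGain φ p = walkGain φ q := by
  have h := walkGain_of_closed hφ hb (p.append q.reverse)
  rw [walkGain_append, walkGain_reverse hφ, mul_inv_eq_one₀ (walkGain_ne_zero hφ q)] at h
  exact h

/-- Gains of a balanced connected gain graph are differences of a unit potential: take
`θ v` to be the gain of a walk from a fixed root to `v`. -/
lemma exists_potential (hconn : G.Connected) :
    ∃ θ : V → ℂ, (∀ v, ‖θ v‖ = 1) ∧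
      ∀ u v (p : G.Walk u v), walkGain φ p = θ v / θ u := by
  obtain ⟨r⟩ := hconn.nonempty
  let W : ∀ v, G.Walk r v := fun v => (hconn r v).some
  refine ⟨fun v => walkGain φ (W v), fun v => norm_walkGain hφ _, fun u v p => ?_⟩
  rw [eq_div_iff (walkGain_ne_zero hφ _), mul_comm, ← walkGain_append]
  exact walkGain_eq hφ hb _ _

end GBalanced

lemma shortestGains_eq_singleton (hconn : G.Connected) {s t : V} {z : ℂ}
    (h : ∀ p : G.Walk s t, walkGain φ p = z) : shortestGains G φ s t = {z} := by
  ext w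
  constructor
  · rintro ⟨p, -, rfl⟩
    exact h p
  · rintro rfl
    obtain ⟨p, hp⟩ := hconn.exists_walk_length_eq_dist s t
    exact ⟨p, hp, h p⟩

@[simp] lemma lexMaxGain_singleton (z : ℂ) : lexMaxGain {z} = z := by
  rw [lexMaxGain, Set.image_singleton, csSup_singleton,
    Set.sep_eq_self_iff_mem_true.mpr (by simp), Set.image_singleton, csSup_singleton]

@[simp] lemma lexMinGain_singleton (z : ℂ) : lexMinGain {z} = z := by
  rw [lexMinGain, Set.image_singleton, csInf_singleton,
    Set.sep_eq_self_iff_mem_true.mpr (by simp), Set.image_singleton, csInf_singleton]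

lemma Dmax_eq_Dmin [Fintype V] (lt : V → V → Prop)
    (h : ∀ s t, ∃ z, shortestGains G φ s t = {z}) : Dmax G φ lt = Dmin G φ lt := by
  have hlex : ∀ s t, lexMaxGain (shortestGains G φ s t) = lexMinGain (shortestGains G φ s t) :=
    fun s t => by obtain ⟨z, hz⟩ := h s t; simp [hz]
  funext s t
  simp only [Dmax, Dmin, hlex]

section kappaMax

variable [LinearOrder V]

lemma kappaMax_eq_div (hconn : G.Connected) {θ : V → ℂ} (hθ : ∀ v, ‖θ v‖ = 1)
    (hpot : ∀ u v (p : G.Walk u v), walkGain φ p = θ v / θ u) {s t : V} (hst : s ≠ t) :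
    kappaMax G φ s t = θ t / θ s := by
  have hshort : ∀ s t, lexMaxGain (shortestGains G φ s t) = θ t / θ s := fun s t => by
    rw [shortestGains_eq_singleton hconn (hpot s t), lexMaxGain_singleton]
  unfold kappaMax
  split_ifs with hadj hlt hgt
  · simpa using hpot s t (Walk.cons hadj .nil)
  · exact hshort s t
  · rw [hshort, map_div₀, ← Complex.inv_eq_conj (hθ s), ← Complex.inv_eq_conj (hθ t),
      inv_div_inv]
  · exact absurd (le_antisymm (not_lt.1 hgt) (not_lt.1 hlt)) hst

lemma walkGain_kappaMax_mapLe {u v : V} (p : G.Walk u v) :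
    walkGain (kappaMax G φ) (p.mapLe le_top) = walkGain φ p := by
  induction p with
  | nil => rfl
  | cons h p ih =>
    rw [Walk.mapLe, Walk.map_cons, walkGain_cons, walkGain_cons, ← Walk.mapLe, ih]
    simp [kappaMax, h]

lemma GBalanced.of_kappaMax (hb : GBalanced (⊤ : SimpleGraph V) (kappaMax G φ)) :
    GBalanced G φ := fun u c hc => by
  simpa [walkGain_kappaMax_mapLe] using hb u _ (hc.mapLe le_top)

end kappaMax

/-- `Φ` is balanced iff `K^{D^max}(Φ)` is balanced; equivalently iff
`D^max(Φ) = D^min(Φ)` and the common complete gain graph `K^D(Φ)` is balanced. -/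
theorem balanced_iff_complete_balanced {V : Type*} [Fintype V] [DecidableEq V]
    [LinearOrder V] (G : SimpleGraph V) (hconn : G.Connected) (φ : V → V → ℂ)
    (hφ : IsGain G φ) :
    (GBalanced G φ ↔ GBalanced (⊤ : SimpleGraph V) (kappaMax G φ)) ∧
    (GBalanced G φ ↔
      (Dmax G φ (· < ·) = Dmin G φ (· < ·) ∧
        GBalanced (⊤ : SimpleGraph V) (kappaMax G φ))) := by
  have hforward : GBalanced G φ →
      Dmax G φ (· < ·) = Dmin G φ (· < ·) ∧
        GBalanced (⊤ : SimpleGraph V) (kappaMax G φ) := by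
    intro hb
    obtain ⟨θ, hθ, hpot⟩ := hb.exists_potential hφ hconn
    have hθ₀ : ∀ v, θ v ≠ 0 := fun v => norm_ne_zero_iff.mp (by simp [hθ v])
    refine ⟨Dmax_eq_Dmin _ fun s t => ⟨_, shortestGains_eq_singleton hconn (hpot s t)⟩, ?_⟩
    exact gBalanced_of_adj_eq_div hθ₀ fun s t hst => kappaMax_eq_div hconn hθ hpot hst.ne
  exact ⟨⟨fun hb => (hforward hb).2, GBalanced.of_kappaMax⟩,
    ⟨hforward, fun h => GBalanced.of_kappaMax h.2⟩⟩

end GG
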